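/- arXiv:1303.0367 — 5 statements merged into one kernel-verified Lean document; each statement's English description precedes it below -/
import Mathlib

section
/- A dyadic shift of complexity (m,n) is bounded on L²(μ) with operator norm at most 1. That is, if Sf(x) = Σ_{L ∈ 𝒟} ∫_L a_L(x,y) f(y) dμ(y) where a_L(x,y) = Σ c_{L,Q,R} h_Q(x) h_R(y) over subcubes Q, R of L with g(Q) = g(L)+m, g(R) = g(L)+n, with Σ_{Q,R} |c_{L,Q,R}|² ≤ 1 for each L, then ‖S‖_{L²(μ)→L²(μ)} ≤ 1. -/
/-!
Since the index sets `QS L` are pairwise disjoint, the vectors `h Q` occurring in `S f` are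
distinct members of an orthonormal family, so `‖S f‖²` is the sum of the squares of the
coefficients `∑_R c_{L,Q,R} ⟪h R, f⟫`. On each block `L`, Cauchy–Schwarz bounds their
contribution by `(∑_{Q,R} c_{L,Q,R}²) · ∑_{R ∈ RS L} ⟪h R, f⟫² ≤ ∑_{R ∈ RS L} ⟪h R, f⟫²`, and
since the `RS L` are pairwise disjoint as well, Bessel's inequality bounds the total by `‖f‖²`.
-/

open Finset

namespace Orthonormal

variable {𝕜 E ι κ : Type*} [RCLike 𝕜] [NormedAddCommGroup E] [InnerProductSpace 𝕜 E]
  {v : ι → E} {s : Finset κ} {q : κ → ι}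

theorem norm_sum_smul_sq (hv : Orthonormal 𝕜 v) (β : ι → 𝕜) (s : Finset ι) :
    ‖∑ i ∈ s, β i • v i‖ ^ 2 = ∑ i ∈ s, ‖β i‖ ^ 2 := by
  rw [← RCLike.ofReal_inj (K := 𝕜), RCLike.ofReal_pow, ← inner_self_eq_norm_sq_to_K,
    hv.inner_sum]
  push_cast
  simp only [RCLike.conj_mul]

theorem norm_sum_smul_comp_sq (hv : Orthonormal 𝕜 v) (hq : Set.InjOn q s) (β : κ → 𝕜) :
    ‖∑ k ∈ s, β k • v (q k)‖ ^ 2 = ∑ k ∈ s, ‖β k‖ ^ 2 := by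
  simpa only [Function.comp_apply, sum_coe_sort s fun k => β k • v (q k),
    sum_coe_sort s fun k => ‖β k‖ ^ 2]
    using (hv.comp (fun k : s => q k) hq.injective).norm_sum_smul_sq (fun k => β k) univ

theorem sum_inner_comp_le (hv : Orthonormal 𝕜 v) (hq : Set.InjOn q s) (x : E) :
    ∑ k ∈ s, ‖inner 𝕜 (v (q k)) x‖ ^ 2 ≤ ‖x‖ ^ 2 := by
  simpa only [Function.comp_apply, sum_coe_sort s fun k => ‖inner 𝕜 (v (q k)) x‖ ^ 2]
    using (hv.comp (fun k : s => q k) hq.injective).sum_inner_products_le x (s := univ)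

end Orthonormal

theorem Set.PairwiseDisjoint.injOn_sigma_snd {ι κ : Type*} {s : Finset ι} {t : ι → Finset κ}
    (ht : (s : Set ι).PairwiseDisjoint t) :
    Set.InjOn (fun p : (_ : ι) × κ => p.2) (s.sigma t) := by
  rintro ⟨i, k⟩ hp ⟨j, k'⟩ hp' (rfl : k = k')
  simp only [coe_sigma, Set.mem_sigma_iff, mem_coe] at hp hp'
  obtain rfl : i = j := ht.elim_finset hp.1 hp'.1 k hp.2 hp'.2
  rfl

theorem Finset.sum_sum_mul_sq_le_sum_sq_mul_sq {R ι κ : Type*} [CommSemiring R] [LinearOrder R]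
    [IsStrictOrderedRing R] [ExistsAddOfLE R] (s : Finset ι) (t : Finset κ) (a : ι → κ → R)
    (x : κ → R) :
    ∑ i ∈ s, (∑ j ∈ t, a i j * x j) ^ 2 ≤ (∑ i ∈ s, ∑ j ∈ t, a i j ^ 2) * ∑ j ∈ t, x j ^ 2 := by
  rw [sum_mul]
  exact sum_le_sum fun i _ => sum_mul_sq_le_sq_mul_sq t (a i) x

theorem dyadic_shift_norm_le_one_general {H : Type*} [NormedAddCommGroup H]
    [InnerProductSpace ℝ H] {ι : Type*}
    (h : ι → H) (horth : Orthonormal ℝ h)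
    (𝔏 : Finset ι) (QS RS : ι → Finset ι)
    (hQdisj : ∀ L ∈ 𝔏, ∀ L' ∈ 𝔏, L ≠ L' → Disjoint (QS L) (QS L'))
    (hRdisj : ∀ L ∈ 𝔏, ∀ L' ∈ 𝔏, L ≠ L' → Disjoint (RS L) (RS L'))
    (c : ι → ι → ι → ℝ)
    (hc : ∀ L ∈ 𝔏, ∑ Q ∈ QS L, ∑ R ∈ RS L, (c L Q R) ^ 2 ≤ 1)
    (f : H) :
    ‖∑ L ∈ 𝔏, ∑ Q ∈ QS L, ∑ R ∈ RS L,
        (c L Q R * (inner ℝ (h R) f : ℝ)) • h Q‖ ≤ ‖f‖ := by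
  have hQ := Set.PairwiseDisjoint.injOn_sigma_snd fun L hL L' hL' => hQdisj L hL L' hL'
  have hR := Set.PairwiseDisjoint.injOn_sigma_snd fun L hL L' hL' => hRdisj L hL L' hL'
  have hS : ∑ L ∈ 𝔏, ∑ Q ∈ QS L, ∑ R ∈ RS L, (c L Q R * inner ℝ (h R) f) • h Q =
      ∑ p ∈ 𝔏.sigma QS, (∑ R ∈ RS p.1, c p.1 p.2 R * inner ℝ (h R) f) • h p.2 := by
    simp only [sum_sigma, sum_smul]
  refine le_of_pow_le_pow_left₀ two_ne_zero (norm_nonneg f) ?_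
  calc ‖∑ L ∈ 𝔏, ∑ Q ∈ QS L, ∑ R ∈ RS L, (c L Q R * inner ℝ (h R) f) • h Q‖ ^ 2
      = ∑ L ∈ 𝔏, ∑ Q ∈ QS L, (∑ R ∈ RS L, c L Q R * inner ℝ (h R) f) ^ 2 := by
        rw [hS, horth.norm_sum_smul_comp_sq hQ, sum_sigma]
        simp only [Real.norm_eq_abs, sq_abs]
    _ ≤ ∑ L ∈ 𝔏, (∑ Q ∈ QS L, ∑ R ∈ RS L, c L Q R ^ 2) * ∑ R ∈ RS L, inner ℝ (h R) f ^ 2 :=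
        sum_le_sum fun L _ => sum_sum_mul_sq_le_sum_sq_mul_sq _ _ _ _
    _ ≤ ∑ L ∈ 𝔏, ∑ R ∈ RS L, inner ℝ (h R) f ^ 2 :=
        sum_le_sum fun L hL =>
          mul_le_of_le_one_left (sum_nonneg fun _ _ => sq_nonneg _) (hc L hL)
    _ ≤ ‖f‖ ^ 2 := by
        simpa only [sum_sigma, Real.norm_eq_abs, sq_abs] using horth.sum_inner_comp_le hR f

/-- a dyadic shift of complexity (m,n) is bounded on L²(μ) with norm at
most 1.  Abstract Hilbert-space formulation: `h` is the orthonormal family of μ-Haar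
functions, for each cube `L` of the (finite part of the) lattice `𝔏` the Finsets `QS L`
and `RS L` index the subcubes of `L` of generations `g(L)+m` and `g(L)+n` (so these index
sets are pairwise disjoint for different `L`), and the coefficients satisfy
`Σ_{Q,R} c_{L,Q,R}² ≤ 1` for each `L`.  Then `‖S f‖ ≤ ‖f‖` where
`S f = Σ_L Σ_{Q,R} c_{L,Q,R} ⟨f, h_R⟩ h_Q`. -/
theorem dyadic_shift_norm_le_one {H : Type*} [NormedAddCommGroup H]
    [InnerProductSpace ℝ H] {ι : Type*} [DecidableEq ι]
    (h : ι → H) (horth : Orthonormal ℝ h)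
    (𝔏 : Finset ι) (QS RS : ι → Finset ι)
    (hQdisj : ∀ L ∈ 𝔏, ∀ L' ∈ 𝔏, L ≠ L' → Disjoint (QS L) (QS L'))
    (hRdisj : ∀ L ∈ 𝔏, ∀ L' ∈ 𝔏, L ≠ L' → Disjoint (RS L) (RS L'))
    (c : ι → ι → ι → ℝ)
    (hc : ∀ L ∈ 𝔏, ∑ Q ∈ QS L, ∑ R ∈ RS L, (c L Q R) ^ 2 ≤ 1)
    (f : H) :
    ‖∑ L ∈ 𝔏, ∑ Q ∈ QS L, ∑ R ∈ RS L,
        (c L Q R * (inner ℝ (h R) f : ℝ)) • h Q‖ ≤ ‖f‖ :=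
  dyadic_shift_norm_le_one_general h horth 𝔏 QS RS hQdisj hRdisj c hc f
end

section
/- (Dyadic Carleson embedding) Let μ be a finite measure, 𝒟 a dyadic lattice, and {a_L}_{L∈𝒟} nonnegative numbers satisfying Σ_{L ⊂ R, L ∈ 𝒟} a_L ≤ μ(R) for every R ∈ 𝒟. Then for every f ∈ L²(μ): Σ_{L∈𝒟} a_L |⟨f⟩_{L,μ}|² ≤ 4 ‖f‖²_{L²(μ)}, where ⟨f⟩_{L,μ} = μ(L)^{-1} ∫_L f dμ. -/
/-!
Let `M` be the maximal function of the averages `⟨|f|⟩_L` over the finite family `𝔊`. Each level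
set `{M ≥ t}` is the disjoint union of the maximal cubes `L ∈ 𝔊` with `⟨|f|⟩_L ≥ t`. On the one
hand the packing condition then bounds the total weight of those cubes by `μ {M ≥ t}`, so by the
layer cake formula the Carleson sum is at most `‖M‖₂²`. On the other hand
`t μ {M ≥ t} ≤ ∫_{M ≥ t} |f|`, which the layer cake formula turns into Doob's estimate
`‖M‖₂² ≤ 2 ∫ |f| M ≤ 2 ‖f‖₂ ‖M‖₂`, i.e. `‖M‖₂² ≤ 4 ‖f‖₂²`.
-/

open MeasureTheory Set
open scoped ENNReal NNReal

theorem ENNReal.coe_toNNReal_div_mul_le (a b : ℝ≥0∞) : ((a / b).toNNReal : ℝ≥0∞) * b ≤ a := by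
  rcases eq_or_ne b 0 with rfl | h0
  · simp
  rcases eq_or_ne b ⊤ with rfl | h1
  · simp
  calc ((a / b).toNNReal : ℝ≥0∞) * b ≤ a / b * b := by
        gcongr
        exact ENNReal.coe_toNNReal_le_self
    _ = a := ENNReal.div_mul_cancel h0 h1

section

variable {α ι : Type*}

def IsLaminar (S : ι → Set α) : Prop :=
  ∀ L L', S L ⊆ S L' ∨ S L' ⊆ S L ∨ Disjoint (S L) (S L')

theorem IsLaminar.exists_pairwiseDisjoint_cover {S : ι → Set α} (hS : IsLaminar S)
    (𝔉 : Finset ι) :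
    ∃ 𝒯 ⊆ 𝔉, (𝒯 : Set ι).PairwiseDisjoint S ∧ ∀ L ∈ 𝔉, ∃ R ∈ 𝒯, S L ⊆ S R := by
  classical
  induction 𝔉 using Finset.induction_on with
  | empty => exact ⟨∅, subset_rfl, by simp, by simp⟩
  | insert L 𝔉 _ ih =>
    obtain ⟨𝒯, h𝒯𝔉, hdisj, hcover⟩ := ih
    by_cases hL : ∃ R ∈ 𝒯, S L ⊆ S R
    · refine ⟨𝒯, h𝒯𝔉.trans (Finset.subset_insert _ _), hdisj, ?_⟩
      simpa [hL] using hcover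
    push Not at hL
    have hinside : ∀ R ∈ 𝒯, ¬Disjoint (S L) (S R) → S R ⊆ S L := fun R hR hR' =>
      ((hS L R).resolve_left (hL R hR)).resolve_right hR'
    refine ⟨insert L (𝒯.filter fun R => Disjoint (S L) (S R)), ?_, ?_, ?_⟩
    · exact Finset.insert_subset_insert _ ((Finset.filter_subset _ _).trans h𝒯𝔉)
    · rw [Finset.coe_insert, Set.pairwiseDisjoint_insert]
      exact ⟨hdisj.subset (Finset.coe_subset.mpr (Finset.filter_subset _ _)),
        fun R hR _ => (Finset.mem_filter.mp hR).2⟩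
    · intro L' hL'
      rcases Finset.mem_insert.mp hL' with rfl | hL'
      · exact ⟨L', Finset.mem_insert_self _ _, subset_rfl⟩
      obtain ⟨R, hR, hL'R⟩ := hcover L' hL'
      by_cases hRL : Disjoint (S L) (S R)
      · exact ⟨R, Finset.mem_insert_of_mem (Finset.mem_filter.mpr ⟨hR, hRL⟩), hL'R⟩
      · exact ⟨L, Finset.mem_insert_self _ _, hL'R.trans (hinside R hR hRL)⟩

theorem biUnion_eq_biUnion_of_forall_subset {S : ι → Set α} {𝒯 𝔉 : Finset ι} (h𝒯 : 𝒯 ⊆ 𝔉)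
    (hcover : ∀ L ∈ 𝔉, ∃ R ∈ 𝒯, S L ⊆ S R) : ⋃ L ∈ 𝔉, S L = ⋃ R ∈ 𝒯, S R := by
  refine (Set.biUnion_subset_biUnion_left h𝒯).antisymm' (Set.iUnion₂_subset fun L hL => ?_)
  obtain ⟨R, hR, hLR⟩ := hcover L hL
  exact hLR.trans (Set.subset_biUnion_of_mem (u := S) hR)

noncomputable def maximalFunction (𝔊 : Finset ι) (S : ι → Set α) (A : ι → ℝ≥0) (x : α) :
    ℝ≥0 :=
  𝔊.sup fun L => (S L).indicator (fun _ => A L) x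

section maximalFunction

variable {S : ι → Set α} {𝔊 : Finset ι} {A : ι → ℝ≥0}

theorem setOf_le_maximalFunction {t : ℝ} (ht : 0 < t) :
    {x | t ≤ (maximalFunction 𝔊 S A x : ℝ)} = ⋃ L ∈ 𝔊.filter (fun L => t ≤ A L), S L := by
  classical
  ext x
  simp only [maximalFunction, mem_ofPred_eq, ← Real.toNNReal_le_iff_le_coe,
    Finset.le_sup_iff (Real.toNNReal_pos.mpr ht), mem_iUnion, Finset.mem_filter, exists_prop,
    and_assoc]
  refine exists_congr fun L => and_congr_right fun _ => ?_
  by_cases hx : x ∈ S L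
  · simp [hx, Real.toNNReal_le_iff_le_coe, and_comm]
  · simp [hx, ht]

theorem measurable_maximalFunction [MeasurableSpace α] (hSm : ∀ L, MeasurableSet (S L)) :
    Measurable (maximalFunction 𝔊 S A) := by
  have : maximalFunction 𝔊 S A = 𝔊.sup fun L => (S L).indicator fun _ => A L := by
    ext x
    simp [maximalFunction, Finset.sup_apply]
  rw [this]
  exact Finset.sup_induction measurable_const (fun _ h _ h' => h.sup h')
    fun L _ => measurable_const.indicator (hSm L)

theorem maximalFunction_le (x : α) : maximalFunction 𝔊 S A x ≤ 𝔊.sup A :=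
  Finset.sup_mono_fun fun _ _ => Set.indicator_le_self' (fun _ _ => zero_le) x

end maximalFunction

section Measure

variable [MeasurableSpace α] {μ : Measure α}

theorem lintegral_sq_eq_lintegral_meas_le {F : α → ℝ≥0} (hF : Measurable F) :
    ∫⁻ x, (F x : ℝ≥0∞) ^ 2 ∂μ =
      ∫⁻ t in Ioi 0, μ {x | t ≤ (F x : ℝ)} * ENNReal.ofReal (2 * t) := by
  refine Eq.trans ?_ (lintegral_comp_eq_lintegral_meas_le_mul μ (g := fun t => 2 * t)
    (Filter.Eventually.of_forall fun x => (F x).2) hF.coe_nnreal_real.aemeasurable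
    (fun t _ => (continuous_const_mul 2).intervalIntegrable _ _)
    (ae_restrict_of_forall_mem measurableSet_Ioi fun t (ht : 0 < t) => by positivity))
  congr 1 with x
  rw [intervalIntegral.integral_const_mul, integral_id, zero_pow two_ne_zero, sub_zero,
    mul_div_cancel₀ _ two_ne_zero, ← NNReal.coe_pow, ENNReal.ofReal_coe_nnreal, ENNReal.coe_pow]

theorem lintegral_sq_le_of_meas_le {β : Type*} [MeasurableSpace β] {ν : Measure β}
    {F : β → ℝ≥0} {G : α → ℝ≥0} (hF : Measurable F) (hG : Measurable G)
    (h : ∀ t : ℝ, 0 < t → ν {y | t ≤ (F y : ℝ)} ≤ μ {x | t ≤ (G x : ℝ)}) :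
    ∫⁻ y, (F y : ℝ≥0∞) ^ 2 ∂ν ≤ ∫⁻ x, (G x : ℝ≥0∞) ^ 2 ∂μ := by
  rw [lintegral_sq_eq_lintegral_meas_le hF, lintegral_sq_eq_lintegral_meas_le hG]
  exact setLIntegral_mono' measurableSet_Ioi fun t ht => by gcongr; exact h t ht

theorem lintegral_sq_le_two_mul_lintegral_mul {M g : α → ℝ≥0} (hM : Measurable M)
    (hg : AEMeasurable g μ)
    (h : ∀ t : ℝ, 0 < t →
      ENNReal.ofReal t * μ {x | t ≤ (M x : ℝ)} ≤ ∫⁻ x in {x | t ≤ (M x : ℝ)}, g x ∂μ) :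
    ∫⁻ x, (M x : ℝ≥0∞) ^ 2 ∂μ ≤ 2 * ∫⁻ x, g x * M x ∂μ := calc
  ∫⁻ x, (M x : ℝ≥0∞) ^ 2 ∂μ
      = ∫⁻ t in Ioi 0, 2 * (ENNReal.ofReal t * μ {x | t ≤ (M x : ℝ)}) := by
        rw [lintegral_sq_eq_lintegral_meas_le hM]
        refine setLIntegral_congr_fun measurableSet_Ioi fun t ht => ?_
        rw [ENNReal.ofReal_mul zero_le_two, ENNReal.ofReal_ofNat]
        ring
  _ ≤ ∫⁻ t in Ioi 0, 2 * μ.withDensity (fun x => g x) {x | t ≤ (M x : ℝ)} := by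
        refine setLIntegral_mono' measurableSet_Ioi fun t ht => ?_
        rw [withDensity_apply _ (measurableSet_le measurable_const hM.coe_nnreal_real)]
        gcongr
        exact h t ht
  _ = 2 * ∫⁻ x, g x * M x ∂μ := by
        rw [lintegral_const_mul' _ _ ENNReal.ofNat_ne_top,
          ← lintegral_eq_lintegral_meas_le (μ.withDensity fun x => (g x : ℝ≥0∞))
            (f := fun x => M x) (Filter.Eventually.of_forall fun x => (M x).2)
            hM.coe_nnreal_real.aemeasurable,
          lintegral_withDensity_eq_lintegral_mul₀ hg.coe_nnreal_ennreal
            (by fun_prop : Measurable fun x => ENNReal.ofReal (M x)).aemeasurable]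
        simp

theorem lintegral_sq_le_four_mul_of_mul_meas_le {M g : α → ℝ≥0} (hM : Measurable M)
    (hg : AEMeasurable g μ) (hM_fin : ∫⁻ x, (M x : ℝ≥0∞) ^ 2 ∂μ ≠ ∞)
    (h : ∀ t : ℝ, 0 < t →
      ENNReal.ofReal t * μ {x | t ≤ (M x : ℝ)} ≤ ∫⁻ x in {x | t ≤ (M x : ℝ)}, g x ∂μ) :
    ∫⁻ x, (M x : ℝ≥0∞) ^ 2 ∂μ ≤ 4 * ∫⁻ x, (g x : ℝ≥0∞) ^ 2 ∂μ := by
  have amgm : ∀ x, 4 * ((g x : ℝ≥0∞) * M x) ≤ 4 * (g x : ℝ≥0∞) ^ 2 + (M x : ℝ≥0∞) ^ 2 := by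
    intro x
    have : (4 * (g x * M x) : ℝ) ≤ 4 * g x ^ 2 + M x ^ 2 := by
      nlinarith [sq_nonneg ((M x : ℝ) - 2 * g x)]
    exact_mod_cast this
  refine ENNReal.le_of_add_le_add_right hM_fin ?_
  calc ∫⁻ x, (M x : ℝ≥0∞) ^ 2 ∂μ + ∫⁻ x, (M x : ℝ≥0∞) ^ 2 ∂μ
      ≤ 2 * (2 * ∫⁻ x, g x * M x ∂μ) := by
        rw [← two_mul]
        gcongr
        exact lintegral_sq_le_two_mul_lintegral_mul hM hg h
    _ = ∫⁻ x, 4 * ((g x : ℝ≥0∞) * M x) ∂μ := by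
        rw [lintegral_const_mul' _ _ ENNReal.ofNat_ne_top]
        ring
    _ ≤ ∫⁻ x, (4 * (g x : ℝ≥0∞) ^ 2 + (M x : ℝ≥0∞) ^ 2) ∂μ := lintegral_mono amgm
    _ = 4 * ∫⁻ x, (g x : ℝ≥0∞) ^ 2 ∂μ + ∫⁻ x, (M x : ℝ≥0∞) ^ 2 ∂μ := by
        rw [lintegral_add_right _ (by fun_prop), lintegral_const_mul' _ _ ENNReal.ofNat_ne_top]

variable {S : ι → Set α}

theorem IsLaminar.sum_le_measure_biUnion (hS : IsLaminar S) (hSm : ∀ L, MeasurableSet (S L))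
    {a : ι → ℝ≥0∞}
    (hpack : ∀ R (𝔉 : Finset ι), (∀ L ∈ 𝔉, S L ⊆ S R) → ∑ L ∈ 𝔉, a L ≤ μ (S R))
    (𝔉 : Finset ι) : ∑ L ∈ 𝔉, a L ≤ μ (⋃ L ∈ 𝔉, S L) := by
  classical
  obtain ⟨𝒯, h𝒯, hdisj, hcover⟩ := hS.exists_pairwiseDisjoint_cover 𝔉
  calc ∑ L ∈ 𝔉, a L ≤ ∑ L ∈ 𝔉, ∑ R ∈ 𝒯, if S L ⊆ S R then a L else 0 := by
        refine Finset.sum_le_sum fun L hL => ?_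
        obtain ⟨R, hR, hLR⟩ := hcover L hL
        simpa [hLR] using Finset.single_le_sum (f := fun R => if S L ⊆ S R then a L else 0)
          (fun _ _ => zero_le) hR
    _ = ∑ R ∈ 𝒯, ∑ L ∈ 𝔉.filter (fun L => S L ⊆ S R), a L := by
        rw [Finset.sum_comm]
        simp only [Finset.sum_filter]
    _ ≤ ∑ R ∈ 𝒯, μ (S R) :=
        Finset.sum_le_sum fun R _ => hpack R _ fun L hL => (Finset.mem_filter.mp hL).2
    _ = μ (⋃ L ∈ 𝔉, S L) := by
        rw [biUnion_eq_biUnion_of_forall_subset h𝒯 hcover,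
          measure_biUnion_finset hdisj fun R _ => hSm R]

theorem IsLaminar.mul_measure_biUnion_le_setLIntegral (hS : IsLaminar S)
    (hSm : ∀ L, MeasurableSet (S L)) {g : α → ℝ≥0∞} {c : ℝ≥0∞} {𝔉 : Finset ι}
    (h : ∀ L ∈ 𝔉, c * μ (S L) ≤ ∫⁻ x in S L, g x ∂μ) :
    c * μ (⋃ L ∈ 𝔉, S L) ≤ ∫⁻ x in ⋃ L ∈ 𝔉, S L, g x ∂μ := by
  obtain ⟨𝒯, h𝒯, hdisj, hcover⟩ := hS.exists_pairwiseDisjoint_cover 𝔉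
  rw [biUnion_eq_biUnion_of_forall_subset h𝒯 hcover,
    measure_biUnion_finset hdisj fun R _ => hSm R,
    lintegral_biUnion_finset hdisj fun R _ => hSm R, Finset.mul_sum]
  exact Finset.sum_le_sum fun R hR => h R (h𝒯 hR)

/-- The left-hand side is `∫ y² dν` for `ν = ∑ a_L δ_{A_L}`, and the packing condition says that
the distribution function of `ν` is dominated by that of the maximal function. -/
theorem IsLaminar.sum_mul_sq_le_lintegral_maximalFunction_sq (hS : IsLaminar S)
    (hSm : ∀ L, MeasurableSet (S L)) {a : ι → ℝ≥0∞}
    (hpack : ∀ R (𝔉 : Finset ι), (∀ L ∈ 𝔉, S L ⊆ S R) → ∑ L ∈ 𝔉, a L ≤ μ (S R))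
    (𝔊 : Finset ι) (A : ι → ℝ≥0) :
    ∑ L ∈ 𝔊, a L * (A L : ℝ≥0∞) ^ 2 ≤ ∫⁻ x, (maximalFunction 𝔊 S A x : ℝ≥0∞) ^ 2 ∂μ := by
  classical
  set ν : Measure ℝ≥0 := ∑ L ∈ 𝔊, a L • Measure.dirac (A L)
  have hν : ∫⁻ y, (y : ℝ≥0∞) ^ 2 ∂ν = ∑ L ∈ 𝔊, a L * (A L : ℝ≥0∞) ^ 2 := by
    simp [ν, lintegral_finsetSum_measure, lintegral_smul_measure, lintegral_dirac]
  rw [← hν]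
  refine lintegral_sq_le_of_meas_le measurable_id (measurable_maximalFunction hSm)
    fun t ht => ?_
  rw [setOf_le_maximalFunction ht]
  calc ν {y | t ≤ (y : ℝ)} = ∑ L ∈ 𝔊.filter (fun L => t ≤ A L), a L := by
        rw [Measure.coe_finsetSum, Finset.sum_apply, Finset.sum_filter]
        refine Finset.sum_congr rfl fun L _ => ?_
        rw [Measure.smul_apply, Measure.dirac_apply' _ (measurableSet_le measurable_const
          measurable_coe_nnreal_real)]
        by_cases h : t ≤ A L <;> simp [h]
    _ ≤ _ := hS.sum_le_measure_biUnion hSm hpack _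

theorem IsLaminar.lintegral_maximalFunction_sq_le [IsFiniteMeasure μ] (hS : IsLaminar S)
    (hSm : ∀ L, MeasurableSet (S L)) {g : α → ℝ≥0} (hg : AEMeasurable g μ) {𝔊 : Finset ι}
    {A : ι → ℝ≥0} (hA : ∀ L ∈ 𝔊, (A L : ℝ≥0∞) * μ (S L) ≤ ∫⁻ x in S L, g x ∂μ) :
    ∫⁻ x, (maximalFunction 𝔊 S A x : ℝ≥0∞) ^ 2 ∂μ ≤ 4 * ∫⁻ x, (g x : ℝ≥0∞) ^ 2 ∂μ := by
  refine lintegral_sq_le_four_mul_of_mul_meas_le (measurable_maximalFunction hSm) hg ?_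
    fun t ht => ?_
  · refine ne_top_of_le_ne_top ?_ (lintegral_mono fun x =>
      pow_le_pow_left₀ zero_le (ENNReal.coe_le_coe.mpr (maximalFunction_le x)) 2)
    rw [lintegral_const]
    exact ENNReal.mul_ne_top (ENNReal.pow_ne_top ENNReal.coe_ne_top) (measure_ne_top _ _)
  · rw [setOf_le_maximalFunction ht]
    refine hS.mul_measure_biUnion_le_setLIntegral hSm fun L hL => ?_
    obtain ⟨hL, htL⟩ := Finset.mem_filter.mp hL
    calc ENNReal.ofReal t * μ (S L) ≤ A L * μ (S L) := by
          gcongr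
          exact ENNReal.ofReal_le_of_le_toReal htL
      _ ≤ _ := hA L hL

theorem lintegral_nnnorm_sq_eq_ofReal_integral_sq {f : α → ℝ}
    (hf : Integrable (fun x => f x ^ 2) μ) :
    ∫⁻ x, (‖f x‖₊ : ℝ≥0∞) ^ 2 ∂μ = ENNReal.ofReal (∫ x, f x ^ 2 ∂μ) := by
  rw [ofReal_integral_eq_lintegral_ofReal hf (ae_of_all _ fun x => sq_nonneg _)]
  congr 1 with x
  rw [← sq_abs, ENNReal.ofReal_pow (abs_nonneg _), ← Real.enorm_eq_ofReal_abs, enorm_eq_nnnorm]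

theorem sq_setAverage_le_sq_toReal {f : α → ℝ} {s : Set α}
    (hf : AEStronglyMeasurable f (μ.restrict s)) :
    ((∫ x in s, f x ∂μ) / μ.real s) ^ 2 ≤ ((∫⁻ x in s, ‖f x‖ₑ ∂μ) / μ s).toReal ^ 2 := by
  rw [ENNReal.toReal_div, ← integral_norm_eq_lintegral_enorm hf, ← measureReal_def]
  have h : |(∫ x in s, f x ∂μ) / μ.real s| ≤ (∫ x in s, ‖f x‖ ∂μ) / μ.real s := by
    rw [abs_div, abs_of_nonneg measureReal_nonneg]
    exact div_le_div_of_nonneg_right (norm_integral_le_integral_norm f) measureReal_nonneg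
  exact sq_le_sq' (abs_le.mp h).1 (abs_le.mp h).2

end Measure

end

theorem dyadic_carleson_embedding_general {α ι : Type*} [MeasurableSpace α]
    (μ : Measure α) [IsFiniteMeasure μ]
    (S : ι → Set α) (hSm : ∀ L, MeasurableSet (S L))
    (hlat : ∀ L L', S L ⊆ S L' ∨ S L' ⊆ S L ∨ Disjoint (S L) (S L'))
    (a : ι → ℝ) (ha : ∀ L, 0 ≤ a L)
    (hCarl : ∀ R : ι, ∀ 𝔉 : Finset ι, (∀ L ∈ 𝔉, S L ⊆ S R) →
      ∑ L ∈ 𝔉, a L ≤ (μ (S R)).toReal)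
    (f : α → ℝ) (hf : MemLp f 2 μ) :
    ∀ 𝔊 : Finset ι,
      ∑ L ∈ 𝔊, a L * ((∫ x in S L, f x ∂μ) / (μ (S L)).toReal) ^ 2
        ≤ 4 * ∫ x, (f x) ^ 2 ∂μ := by
  intro 𝔊
  set A : ι → ℝ≥0 := fun L => ((∫⁻ x in S L, ‖f x‖ₑ ∂μ) / μ (S L)).toNNReal
  have hpack : ∀ R (𝔉 : Finset ι), (∀ L ∈ 𝔉, S L ⊆ S R) →
      ∑ L ∈ 𝔉, ENNReal.ofReal (a L) ≤ μ (S R) := fun R 𝔉 h𝔉 => by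
    rw [← ENNReal.ofReal_sum_of_nonneg fun L _ => ha L,
      ← ENNReal.ofReal_toReal (measure_ne_top μ (S R))]
    exact ENNReal.ofReal_le_ofReal (hCarl R 𝔉 h𝔉)
  have hS : IsLaminar S := hlat
  have key := (hS.sum_mul_sq_le_lintegral_maximalFunction_sq hSm hpack 𝔊 A).trans
    (hS.lintegral_maximalFunction_sq_le hSm (g := fun x => ‖f x‖₊)
      hf.aestronglyMeasurable.nnnorm.aemeasurable fun L _ => ENNReal.coe_toNNReal_div_mul_le _ _)
  have hsq := lintegral_nnnorm_sq_eq_ofReal_integral_sq hf.integrable_sq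
  calc ∑ L ∈ 𝔊, a L * ((∫ x in S L, f x ∂μ) / (μ (S L)).toReal) ^ 2
      ≤ ∑ L ∈ 𝔊, a L * (A L : ℝ) ^ 2 := Finset.sum_le_sum fun L _ =>
        mul_le_mul_of_nonneg_left (sq_setAverage_le_sq_toReal hf.aestronglyMeasurable.restrict)
          (ha L)
    _ = (∑ L ∈ 𝔊, ENNReal.ofReal (a L) * (A L : ℝ≥0∞) ^ 2).toReal := by
        rw [ENNReal.toReal_sum fun L _ => by finiteness]
        exact Finset.sum_congr rfl fun L _ => by simp [ENNReal.toReal_ofReal (ha L)]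
    _ ≤ (4 * ENNReal.ofReal (∫ x, f x ^ 2 ∂μ)).toReal :=
        ENNReal.toReal_mono (by finiteness) (hsq ▸ key)
    _ = 4 * ∫ x, f x ^ 2 ∂μ := by
        rw [ENNReal.toReal_mul, ENNReal.toReal_ofReal (integral_nonneg fun x => sq_nonneg _)]
        norm_num

/-- dyadic Carleson embedding: if nonnegative numbers `a L` attached to the
cubes of a dyadic lattice (nested-or-disjoint family `S`) satisfy the packing condition
`Σ_{L ⊆ R} a L ≤ μ(R)` for every cube `R`, then for every `f ∈ L²(μ)`
`Σ_L a L |⟨f⟩_{L,μ}|² ≤ 4‖f‖²_{L²(μ)}` (stated via arbitrary finite subfamilies, which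
is equivalent for nonnegative terms). -/
theorem dyadic_carleson_embedding {α ι : Type*} [MeasurableSpace α]
    (μ : Measure α) [IsFiniteMeasure μ]
    (S : ι → Set α) (hSm : ∀ L, MeasurableSet (S L))
    (hlat : ∀ L L', S L ⊆ S L' ∨ S L' ⊆ S L ∨ Disjoint (S L) (S L'))
    (a : ι → ℝ) (ha : ∀ L, 0 ≤ a L)
    (hCarl : ∀ R : ι, ∀ 𝔉 : Finset ι, (∀ L ∈ 𝔉, S L ⊆ S R) →
      ∑ L ∈ 𝔉, a L ≤ (μ (S R)).toReal)
    (f : α → ℝ) (hfm : Measurable f) (hf : MemLp f 2 μ) :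
    ∀ 𝔊 : Finset ι,
      ∑ L ∈ 𝔊, a L * ((∫ x in S L, f x ∂μ) / (μ (S L)).toReal) ^ 2
        ≤ 4 * ∫ x, (f x) ^ 2 ∂μ :=
  dyadic_carleson_embedding_general μ S hSm hlat a ha hCarl f hf
end

section
/- Let T be any linear operator on a finite-dimensional Haar span, and suppose goodness of a cube R is a random event independent of cubes strictly larger than R, with probability exactly 1/2 for every cube. Then (1/2)·𝔼 Σ_{ℓ(Q) ≥ ℓ(R)} (T h_Q, h_R)(f, h_Q)(g, h_R) = 𝔼 Σ_{ℓ(Q) ≥ ℓ(R), R good} (T h_Q, h_R)(f, h_Q)(g, h_R), where the expectation is over the random dyadic lattice. -/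
/-!
Fix a lattice and split the pairs `(Q, R)` with `ℓ R ≤ ℓ Q` as all pairs minus those with
`ℓ Q < ℓ R`. Summing over all `Q` collapses, by the Haar expansion of `f`, to a function of `R`
alone, so the goodness probability of a single cube halves its expectation; on the pairs with
`ℓ Q < ℓ R` the goodness of `R` is independent of `Q ∈ 𝒟(ω)` and halves that expectation too.
-/

open Finset

section RandomFinset

variable {Ω κ : Type*} [Fintype Ω] [DecidableEq κ]

theorem sum_mul_sum_eq_sum_sum_filter_mul {M : Type*} [NonUnitalNonAssocSemiring M]
    (w : Ω → M) (A : Finset κ) (S : Ω → Finset κ) (hS : ∀ ω, S ω ⊆ A) (c : κ → M) :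
    ∑ ω, w ω * ∑ x ∈ S ω, c x = ∑ x ∈ A, (∑ ω with x ∈ S ω, w ω) * c x := by
  simp_rw [mul_sum, sum_mul]
  exact sum_comm' fun ω x => by
    simp only [mem_univ, true_and, mem_filter]
    exact ⟨fun hx => ⟨hx, hS ω hx⟩, And.left⟩

theorem sum_mul_sum_eq_mul_of_sum_filter_eq_mul {R : Type*} [CommSemiring R] (w : Ω → R)
    {S S' : Ω → Finset κ} (hS' : ∀ ω, S' ω ⊆ S ω) (p : R)
    (hp : ∀ x, ∑ ω with x ∈ S' ω, w ω = p * ∑ ω with x ∈ S ω, w ω) (c : κ → R) :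
    ∑ ω, w ω * ∑ x ∈ S' ω, c x = p * ∑ ω, w ω * ∑ x ∈ S ω, c x := by
  have hS : ∀ ω, S ω ⊆ univ.biUnion S := fun ω => subset_biUnion_of_mem S (mem_univ ω)
  rw [sum_mul_sum_eq_sum_sum_filter_mul w _ S' fun ω => (hS' ω).trans (hS ω),
    sum_mul_sum_eq_sum_sum_filter_mul w _ S hS, mul_sum]
  simp_rw [hp, mul_assoc]

end RandomFinset

theorem sum_sum_filter_le_eq_sub {ι α M : Type*} [LinearOrder α] [AddCommGroup M]
    (ℓ : ι → α) (A B : Finset ι) (t : ι → ι → M) :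
    ∑ Q ∈ A, ∑ R ∈ B with ℓ R ≤ ℓ Q, t Q R
      = ∑ Q ∈ A, ∑ R ∈ B, t Q R - ∑ q ∈ A ×ˢ B with ℓ q.1 < ℓ q.2, t q.1 q.2 := by
  rw [sum_filter (fun q : ι × ι => ℓ q.1 < ℓ q.2), sum_product, ← sum_sub_distrib]
  refine sum_congr rfl fun Q _ => ?_
  rw [sum_filter, ← sum_sub_distrib]
  refine sum_congr rfl fun R _ => ?_
  rcases le_or_gt (ℓ R) (ℓ Q) with hle | hlt
  · simp [hle, hle.not_gt]
  · simp [hlt, hlt.not_ge]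

theorem mul_sum_mul_sum_sum_filter_le_eq_of_thinning {ι Ω α : Type*} [Fintype Ω] [DecidableEq ι]
    [LinearOrder α] (w : Ω → ℝ) (D G : Ω → Finset ι) (hGD : ∀ ω, G ω ⊆ D ω) (ℓ : ι → α)
    (t : ι → ι → ℝ) (s : ι → ℝ) (hs : ∀ ω, ∀ R ∈ D ω, ∑ Q ∈ D ω, t Q R = s R) (p : ℝ)
    (hG : ∀ R, ∑ ω with R ∈ G ω, w ω = p * ∑ ω with R ∈ D ω, w ω)
    (hGpair : ∀ Q R, ℓ Q < ℓ R →
      ∑ ω with Q ∈ D ω ∧ R ∈ G ω, w ω = p * ∑ ω with Q ∈ D ω ∧ R ∈ D ω, w ω) :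
    p * ∑ ω, w ω * ∑ Q ∈ D ω, ∑ R ∈ D ω with ℓ R ≤ ℓ Q, t Q R
      = ∑ ω, w ω * ∑ Q ∈ D ω, ∑ R ∈ G ω with ℓ R ≤ ℓ Q, t Q R := by
  have split : ∀ ω, ∀ S ⊆ D ω, ∑ Q ∈ D ω, ∑ R ∈ S with ℓ R ≤ ℓ Q, t Q R
      = ∑ R ∈ S, s R - ∑ q ∈ D ω ×ˢ S with ℓ q.1 < ℓ q.2, t q.1 q.2 := fun ω S hS => by
    rw [sum_sum_filter_le_eq_sub, sum_comm, sum_congr rfl fun R hR => hs ω R (hS hR)]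
  -- Pairs with `ℓ Q ≥ ℓ R` lie in neither family, so `hGpair` extends to all pairs.
  have hpair_marginal : ∀ q : ι × ι,
      ∑ ω with q ∈ {q ∈ D ω ×ˢ G ω | ℓ q.1 < ℓ q.2}, w ω
        = p * ∑ ω with q ∈ {q ∈ D ω ×ˢ D ω | ℓ q.1 < ℓ q.2}, w ω := fun q => by
    by_cases hq : ℓ q.1 < ℓ q.2
    · simpa only [mem_filter, mem_product, hq, and_true] using hGpair q.1 q.2 hq
    · simp [hq]
  have hsingle := sum_mul_sum_eq_mul_of_sum_filter_eq_mul w hGD p hG s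
  have hpair := sum_mul_sum_eq_mul_of_sum_filter_eq_mul w
    (fun ω => filter_subset_filter _ (product_subset_product_right (hGD ω))) p hpair_marginal
    fun q => t q.1 q.2
  simp only [fun ω => split ω (D ω) subset_rfl, fun ω => split ω (G ω) (hGD ω), mul_sub,
    sum_sub_distrib, hsingle, hpair]

open scoped Classical in
theorem averaging_good_cubes_general {H ι Ω : Type*} [NormedAddCommGroup H]
    [InnerProductSpace ℝ H] [Fintype Ω] [DecidableEq ι]
    (w : Ω → ℝ)
    (D G : Ω → Finset ι) (hGD : ∀ ω, G ω ⊆ D ω)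
    (ℓ : ι → ℝ) (h : ι → H) (T : H →ₗ[ℝ] H) (f g : H)
    (t : ι → ι → ℝ)
    (ht : ∀ Q R, t Q R =
      (inner ℝ (T (h Q)) (h R) : ℝ) * (inner ℝ f (h Q) : ℝ) * (inner ℝ g (h R) : ℝ))
    (H1 : ∀ ω, ∀ R ∈ D ω,
      ∑ Q ∈ D ω, (inner ℝ (T (h Q)) (h R) : ℝ) * (inner ℝ f (h Q) : ℝ)
        = (inner ℝ (T f) (h R) : ℝ))
    (H3 : ∀ R : ι,
      ∑ ω ∈ Finset.univ.filter (fun ω => R ∈ G ω), w ω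
        = (1 / 2) * ∑ ω ∈ Finset.univ.filter (fun ω => R ∈ D ω), w ω)
    (H4 : ∀ Q R : ι, ℓ Q < ℓ R →
      ∑ ω ∈ Finset.univ.filter (fun ω => Q ∈ D ω ∧ R ∈ G ω), w ω
        = (1 / 2) * ∑ ω ∈ Finset.univ.filter (fun ω => Q ∈ D ω ∧ R ∈ D ω), w ω) :
    (1 / 2) * ∑ ω, w ω *
        ∑ Q ∈ D ω, ∑ R ∈ (D ω).filter (fun R => ℓ R ≤ ℓ Q), t Q R
      = ∑ ω, w ω *
        ∑ Q ∈ D ω, ∑ R ∈ (G ω).filter (fun R => ℓ R ≤ ℓ Q), t Q R := by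
  have haar_expansion : ∀ ω, ∀ R ∈ D ω,
      ∑ Q ∈ D ω, t Q R = inner ℝ (T f) (h R) * inner ℝ g (h R) := fun ω R hR => by
    simp_rw [ht, ← sum_mul, H1 ω R hR]
  exact mul_sum_mul_sum_sum_filter_le_eq_of_thinning w D G hGD ℓ t _ haar_expansion _ H3 H4

open scoped Classical in
/-- the averaging/goodness identity.  `(Ω, w)` is the (finite) probability
space of random dyadic lattices, `D ω` the lattice, `G ω ⊆ D ω` its good cubes, `h Q` the
Haar function of the cube `Q`, `T` any linear operator, and
`t Q R = (T h_Q, h_R)(f, h_Q)(g, h_R)`.  Assuming (i) for every lattice the Haar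
expansions reproduce `f` and `g` in the bilinear form of `T` (hypotheses `H1`, `H2`),
(ii) conditioned on `Q, R ∈ 𝒟(ω)` with `ℓ(Q) < ℓ(R)`, the event "`R` is good" has
probability 1/2 (hypothesis `H4`), and (iii) each cube is good with conditional
probability exactly 1/2 (hypothesis `H3`), one has
`(1/2)·𝔼 Σ_{ℓ(Q) ≥ ℓ(R)} t Q R = 𝔼 Σ_{ℓ(Q) ≥ ℓ(R), R good} t Q R`. -/
theorem averaging_good_cubes {H ι Ω : Type*} [NormedAddCommGroup H]
    [InnerProductSpace ℝ H] [Fintype Ω] [DecidableEq ι]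
    (w : Ω → ℝ) (hw0 : ∀ ω, 0 ≤ w ω) (hw1 : ∑ ω, w ω = 1)
    (D G : Ω → Finset ι) (hGD : ∀ ω, G ω ⊆ D ω)
    (ℓ : ι → ℝ) (h : ι → H) (T : H →ₗ[ℝ] H) (f g : H)
    (t : ι → ι → ℝ)
    (ht : ∀ Q R, t Q R =
      (inner ℝ (T (h Q)) (h R) : ℝ) * (inner ℝ f (h Q) : ℝ) * (inner ℝ g (h R) : ℝ))
    (H1 : ∀ ω, ∀ R ∈ D ω,
      ∑ Q ∈ D ω, (inner ℝ (T (h Q)) (h R) : ℝ) * (inner ℝ f (h Q) : ℝ)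
        = (inner ℝ (T f) (h R) : ℝ))
    (H2 : ∀ ω, ∑ R ∈ D ω, (inner ℝ (T f) (h R) : ℝ) * (inner ℝ g (h R) : ℝ)
        = (inner ℝ (T f) g : ℝ))
    (H3 : ∀ R : ι,
      ∑ ω ∈ Finset.univ.filter (fun ω => R ∈ G ω), w ω
        = (1 / 2) * ∑ ω ∈ Finset.univ.filter (fun ω => R ∈ D ω), w ω)
    (H4 : ∀ Q R : ι, ℓ Q < ℓ R →
      ∑ ω ∈ Finset.univ.filter (fun ω => Q ∈ D ω ∧ R ∈ G ω), w ω
        = (1 / 2) * ∑ ω ∈ Finset.univ.filter (fun ω => Q ∈ D ω ∧ R ∈ D ω), w ω) :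
    (1 / 2) * ∑ ω, w ω *
        ∑ Q ∈ D ω, ∑ R ∈ (D ω).filter (fun R => ℓ R ≤ ℓ Q), t Q R
      = ∑ ω, w ω *
        ∑ Q ∈ D ω, ∑ R ∈ (G ω).filter (fun R => ℓ R ≤ ℓ Q), t Q R :=
  averaging_good_cubes_general w D G hGD ℓ h T f g t ht H1 H3 H4
end

section
/- Let T be an operator with CZ kernel of order m and parameter ε with respect to a measure μ satisfying μ(B(x,ρ)) ≤ ρ^m, and suppose ‖T* 1_P‖²_{L²(μ)} ≤ C₀ μ(P) for every cube P. Let S be a dyadic cube, S' = 1.1 S, and Q ⊂ S a dyadic subcube. Then ‖Δ_Q T*(1 − 1_{S'})‖²_{L²(μ)} ≤ C μ(Q) (ℓ(Q)/ℓ(S))^{2ε}, where Δ_Q is the μ-martingale difference onto Q and C depends only on d, m, ε. -/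
open MeasureTheory

/-- The (half-open) cube in `ℝ^d` with center `z` and side `ℓ`. -/
def dyadicCube {d : ℕ} (z : Fin d → ℝ) (ℓ : ℝ) : Set (Fin d → ℝ) :=
  {x | ∀ i, z i - ℓ / 2 ≤ x i ∧ x i < z i + ℓ / 2}

/-- The center of the dyadic child of the cube `(z, ℓ)` with position `σ`. -/
noncomputable def childCenter {d : ℕ} (z : Fin d → ℝ) (ℓ : ℝ) (σ : Fin d → Bool) : Fin d → ℝ :=
  fun i => z i + (if σ i then ℓ / 4 else -(ℓ / 4))

/-- The μ-average of `F` over a set `A`. -/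
noncomputable def cubeAvg {d : ℕ} (μ : Measure (Fin d → ℝ)) (A : Set (Fin d → ℝ))
    (F : (Fin d → ℝ) → ℝ) : ℝ :=
  (∫ x in A, F x ∂μ) / (μ A).toReal

/-- The μ-martingale difference of `F` on the cube with center `z`, side `ℓ`:
`Δ_Q F = Σ_{Q' child of Q} ⟨F⟩_{Q',μ} 1_{Q'} − ⟨F⟩_{Q,μ} 1_Q`. -/
noncomputable def mdiff {d : ℕ} (μ : Measure (Fin d → ℝ)) (z : Fin d → ℝ) (ℓ : ℝ)
    (F : (Fin d → ℝ) → ℝ) : (Fin d → ℝ) → ℝ :=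
  fun x =>
    (∑ σ : Fin d → Bool,
      Set.indicator (dyadicCube (childCenter z ℓ σ) (ℓ / 2))
        (fun _ => cubeAvg μ (dyadicCube (childCenter z ℓ σ) (ℓ / 2)) F) x)
    - Set.indicator (dyadicCube z ℓ) (fun _ => cubeAvg μ (dyadicCube z ℓ) F) x

/-!
`Δ_Q F` vanishes off `Q` and is bounded by twice the supremum of `|F|` on `Q`, so it
suffices to bound `F y = ∫_{S'ᶜ} (K x y - K x z_Q) dμ(x)` by `C (ℓQ/ℓS)^ε` for `y ∈ Q`.
Every `x ∉ S'` is at distance at least `ℓS/20` from `S`. Where `dist x y ≥ ℓQ`, the Hölder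
bound applies and summing the growth condition over dyadic annuli gives
`∫_{dist x y ≥ ρ} dist(x,y)^{-(m+ε)} dμ ≲ ρ^{-ε}` with `ρ = ℓS/20`. The remaining
points lie in `B(y, ℓQ)` and exist only when `ℓQ > ℓS/20`; there the size bound gives
`(ℓQ/ℓS)^m ≲ 1 ≲ (ℓQ/ℓS)^ε`.
-/

open Metric

lemma one_sub_two_rpow_neg_pos {ε : ℝ} (hε : 0 < ε) : 0 < 1 - (2 : ℝ) ^ (-ε) :=
  sub_pos.2 (Real.rpow_lt_one_of_one_lt_of_neg one_lt_two (neg_neg_of_pos hε))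

section DyadicTail

variable {X : Type*} [PseudoMetricSpace X] [MeasurableSpace X] [OpensMeasurableSpace X]
  {μ : Measure X} {m ε : ℝ}

lemma ofReal_one_div_rpow_mul_rpow_two_mul {a : ℝ} (ha : 0 < a) :
    ENNReal.ofReal (1 / a ^ (m + ε)) * ENNReal.ofReal ((2 * a) ^ m)
      = ENNReal.ofReal (2 ^ m * a ^ (-ε)) := by
  rw [← ENNReal.ofReal_mul (by positivity), Real.mul_rpow zero_le_two ha.le,
    Real.rpow_add ha, Real.rpow_neg ha.le]
  congr 1
  field_simp

lemma lintegral_one_div_dist_rpow_le (hmε : 0 ≤ m + ε) (hε : 0 < ε)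
    (hgrowth : ∀ x ρ, 0 < ρ → μ (ball x ρ) ≤ ENNReal.ofReal (ρ ^ m))
    (y : X) {R : ℝ} (hR : 0 < R) :
    ∫⁻ x in {x | R ≤ dist x y}, ENNReal.ofReal (1 / dist x y ^ (m + ε)) ∂μ
      ≤ ENNReal.ofReal (2 ^ m * (1 - 2 ^ (-ε))⁻¹ * R ^ (-ε)) := by
  set a : ℕ → ℝ := fun k => 2 ^ k * R
  have ha : ∀ k, 0 < a k := fun k => by positivity
  have hq0 : (0 : ℝ) ≤ 2 ^ (-ε) := by positivity
  have hq1 : (2 : ℝ) ^ (-ε) < 1 := sub_pos.1 (one_sub_two_rpow_neg_pos hε)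
  -- dominate the integrand on each dyadic annulus `a k ≤ dist x y < 2 a k` by a ball term
  have hpt : ∀ x ∈ {x | R ≤ dist x y}, ENNReal.ofReal (1 / dist x y ^ (m + ε))
      ≤ ∑' k, (ball y (2 * a k)).indicator
          (fun _ => ENNReal.ofReal (1 / a k ^ (m + ε))) x := by
    intro x hx
    obtain ⟨k, hk, hk'⟩ := exists_nat_pow_near ((one_le_div hR).2 hx) one_lt_two
    refine le_trans ?_ (ENNReal.le_tsum k)
    have hxk : x ∈ ball y (2 * a k) := by
      rw [div_lt_iff₀ hR, pow_succ] at hk'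
      rw [mem_ball]
      linarith
    rw [Set.indicator_of_mem hxk]
    refine ENNReal.ofReal_le_ofReal (one_div_le_one_div_of_le (by positivity) ?_)
    exact Real.rpow_le_rpow (ha k).le ((le_div_iff₀ hR).1 hk) hmε
  calc ∫⁻ x in {x | R ≤ dist x y}, ENNReal.ofReal (1 / dist x y ^ (m + ε)) ∂μ
      ≤ ∫⁻ x, ∑' k, (ball y (2 * a k)).indicator
          (fun _ => ENNReal.ofReal (1 / a k ^ (m + ε))) x ∂μ :=
        (setLIntegral_mono' (measurableSet_le measurable_const
          (continuous_id.dist continuous_const).measurable) hpt).trans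
          (setLIntegral_le_lintegral _ _)
    _ = ∑' k, ENNReal.ofReal (1 / a k ^ (m + ε)) * μ (ball y (2 * a k)) := by
        rw [lintegral_tsum fun k => (measurable_const.indicator measurableSet_ball).aemeasurable]
        simp only [lintegral_indicator_const measurableSet_ball]
    _ ≤ ∑' k, ENNReal.ofReal (2 ^ m * R ^ (-ε) * (2 ^ (-ε)) ^ k) := by
        refine ENNReal.tsum_le_tsum fun k => ?_
        grw [hgrowth y _ (by linarith [ha k]), ofReal_one_div_rpow_mul_rpow_two_mul (ha k)]
        rw [Real.mul_rpow (by positivity) hR.le, ← Real.rpow_natCast,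
          ← Real.rpow_mul zero_le_two, ← Real.rpow_natCast, ← Real.rpow_mul zero_le_two,
          mul_comm (k : ℝ)]
        exact le_of_eq (by ring_nf)
    _ = ENNReal.ofReal (2 ^ m * (1 - 2 ^ (-ε))⁻¹ * R ^ (-ε)) := by
        rw [← ENNReal.ofReal_tsum_of_nonneg (fun k => by positivity)
          ((summable_geometric_of_lt_one hq0 hq1).mul_left _), tsum_mul_left,
          tsum_geometric_of_lt_one hq0 hq1]
        ring_nf

end DyadicTail

section Kernel

variable {X : Type*} [MetricSpace X] {K : X → X → ℝ} {m ε : ℝ}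

lemma abs_le_one_div_rpow_of_le_dist (hm : 0 ≤ m)
    (hsize : ∀ x y, x ≠ y → |K x y| ≤ 1 / dist x y ^ m)
    {x y : X} {δ : ℝ} (hδ : 0 < δ) (hxy : δ ≤ dist x y) : |K x y| ≤ 1 / δ ^ m :=
  (hsize x y (dist_pos.1 (hδ.trans_le hxy))).trans
    (one_div_le_one_div_of_le (by positivity) (Real.rpow_le_rpow hδ.le hxy hm))

variable [MeasurableSpace X] {μ : Measure X}

lemma lintegral_abs_kernel_sub_le_of_near (hm : 0 ≤ m) (hε : 0 ≤ ε)
    (hgrowth : ∀ x ρ, 0 < ρ → μ (ball x ρ) ≤ ENNReal.ofReal (ρ ^ m))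
    (hsize : ∀ x y, x ≠ y → |K x y| ≤ 1 / dist x y ^ m)
    {s : Set X} {y z : X} {R δ : ℝ} (hδ : 0 < δ) (hsR : s ⊆ ball y R)
    (hs : ∀ x ∈ s, δ ≤ dist x y ∧ δ ≤ dist x z) :
    ∫⁻ x in s, ENNReal.ofReal |K x y - K x z| ∂μ
      ≤ ENNReal.ofReal (2 * (R / δ) ^ (m + ε)) := by
  -- `s = ∅` unless `δ < R`, so the exponent may be raised from `m` to `m + ε`
  rcases le_or_gt R δ with hRδ | hδR
  · have hs_empty : s = ∅ := Set.eq_empty_of_forall_notMem fun x hx =>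
      (mem_ball.1 (hsR hx)).not_ge (hRδ.trans (hs x hx).1)
    simp [hs_empty]
  have hRδ : 1 ≤ R / δ := (one_le_div hδ).2 hδR.le
  calc ∫⁻ x in s, ENNReal.ofReal |K x y - K x z| ∂μ
      ≤ ∫⁻ _ in s, ENNReal.ofReal (2 / δ ^ m) ∂μ := by
        refine setLIntegral_mono measurable_const fun x hx => ENNReal.ofReal_le_ofReal ?_
        calc |K x y - K x z| ≤ |K x y| + |K x z| := abs_sub _ _
          _ ≤ 1 / δ ^ m + 1 / δ ^ m :=
            add_le_add (abs_le_one_div_rpow_of_le_dist hm hsize hδ (hs x hx).1)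
              (abs_le_one_div_rpow_of_le_dist hm hsize hδ (hs x hx).2)
          _ = 2 / δ ^ m := by ring
    _ ≤ ENNReal.ofReal (2 / δ ^ m) * ENNReal.ofReal (R ^ m) := by
        rw [setLIntegral_const]
        gcongr
        exact (measure_mono hsR).trans (hgrowth y R (hδ.trans hδR))
    _ = ENNReal.ofReal (2 * (R / δ) ^ m) := by
        rw [← ENNReal.ofReal_mul (by positivity), Real.div_rpow (hδ.trans hδR).le hδ.le]
        ring_nf
    _ ≤ ENNReal.ofReal (2 * (R / δ) ^ (m + ε)) := by
        gcongr
        linarith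

variable [OpensMeasurableSpace X]

lemma lintegral_abs_kernel_sub_le_of_far (hmε : 0 ≤ m + ε) (hε : 0 < ε)
    (hgrowth : ∀ x ρ, 0 < ρ → μ (ball x ρ) ≤ ENNReal.ofReal (ρ ^ m))
    (hholder : ∀ x y y', 2 * dist y y' ≤ dist x y →
      |K x y - K x y'| ≤ dist y y' ^ ε / dist x y ^ (m + ε))
    {s : Set X} {y z : X} {R : ℝ} (hR : 0 < R)
    (hs : ∀ x ∈ s, R ≤ dist x y ∧ 2 * dist y z ≤ dist x y) :
    ∫⁻ x in s, ENNReal.ofReal |K x y - K x z| ∂μ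
      ≤ ENNReal.ofReal (2 ^ m * (1 - 2 ^ (-ε))⁻¹ * (dist y z / R) ^ ε) := by
  have hmeas : Measurable fun x => ENNReal.ofReal (1 / dist x y ^ (m + ε)) := by fun_prop
  calc ∫⁻ x in s, ENNReal.ofReal |K x y - K x z| ∂μ
      ≤ ∫⁻ x in s,
          ENNReal.ofReal (dist y z ^ ε) * ENNReal.ofReal (1 / dist x y ^ (m + ε)) ∂μ := by
        refine setLIntegral_mono (hmeas.const_mul _) fun x hx => ?_
        rw [← ENNReal.ofReal_mul (by positivity), mul_one_div]
        exact ENNReal.ofReal_le_ofReal (hholder x y z (hs x hx).2)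
    _ ≤ ENNReal.ofReal (dist y z ^ ε) *
          ∫⁻ x in {x | R ≤ dist x y}, ENNReal.ofReal (1 / dist x y ^ (m + ε)) ∂μ := by
        rw [lintegral_const_mul _ hmeas]
        gcongr
        exact fun x hx => (hs x hx).1
    _ ≤ ENNReal.ofReal (dist y z ^ ε) *
          ENNReal.ofReal (2 ^ m * (1 - 2 ^ (-ε))⁻¹ * R ^ (-ε)) := by
        gcongr
        exact lintegral_one_div_dist_rpow_le hmε hε hgrowth y hR
    _ = ENNReal.ofReal (2 ^ m * (1 - 2 ^ (-ε))⁻¹ * (dist y z / R) ^ ε) := by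
        rw [← ENNReal.ofReal_mul (by positivity), Real.div_rpow dist_nonneg hR.le,
          Real.rpow_neg hR.le]
        ring_nf

end Kernel

section DyadicCube
variable {d : ℕ}

lemma center_mem_dyadicCube (z : Fin d → ℝ) {ℓ : ℝ} (hℓ : 0 < ℓ) :
    z ∈ dyadicCube z ℓ :=
  fun _ => ⟨by linarith, by linarith⟩

lemma dist_le_of_mem_dyadicCube {z y : Fin d → ℝ} {ℓ : ℝ} (hℓ : 0 ≤ ℓ)
    (hy : y ∈ dyadicCube z ℓ) : dist y z ≤ ℓ / 2 := by
  refine (dist_pi_le_iff (by linarith)).2 fun i => ?_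
  rw [Real.dist_eq, abs_le]
  constructor <;> linarith [hy i]

lemma sub_div_two_le_dist_of_mem_dyadicCube_of_notMem {z x w : Fin d → ℝ} {a b : ℝ}
    (hw : w ∈ dyadicCube z a) (hx : x ∉ dyadicCube z b) : (b - a) / 2 ≤ dist x w := by
  simp only [dyadicCube, Set.mem_ofPred_eq, not_forall, not_and_or, not_le, not_lt] at hx
  obtain ⟨i, hi⟩ := hx
  refine le_trans ?_ (dist_le_pi_dist x w i)
  rw [Real.dist_eq, le_abs]
  rcases hi with hi | hi
  · right; linarith [hw i]
  · left; linarith [hw i]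

lemma dyadicCube_childCenter_subset (z : Fin d → ℝ) (ℓ : ℝ) (σ : Fin d → Bool) :
    dyadicCube (childCenter z ℓ σ) (ℓ / 2) ⊆ dyadicCube z ℓ := by
  intro x hx i
  have := hx i
  simp only [childCenter] at this
  cases hσ : σ i <;> simp only [hσ, Bool.false_eq_true, if_true, if_false] at this <;>
    constructor <;> linarith [this.1, this.2]

lemma eq_of_mem_dyadicCube_childCenter {z x : Fin d → ℝ} {ℓ : ℝ} {σ : Fin d → Bool}
    (hx : x ∈ dyadicCube (childCenter z ℓ σ) (ℓ / 2)) :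
    σ = fun i => decide (z i ≤ x i) := by
  funext i
  have := hx i
  simp only [childCenter] at this
  cases hσ : σ i <;> simp only [hσ, Bool.false_eq_true, if_true, if_false] at this
  · exact (decide_eq_false (by linarith [this.2])).symm
  · exact (decide_eq_true (by linarith [this.1])).symm

end DyadicCube

section MartingaleDifference
variable {d : ℕ} {μ : Measure (Fin d → ℝ)} {F : (Fin d → ℝ) → ℝ} {M : ℝ}

lemma abs_cubeAvg_le [IsFiniteMeasure μ] {A : Set (Fin d → ℝ)} (hM : 0 ≤ M)
    (hF : ∀ x ∈ A, |F x| ≤ M) : |cubeAvg μ A F| ≤ M := by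
  rw [cubeAvg, abs_div, abs_of_nonneg ENNReal.toReal_nonneg]
  exact div_le_of_le_mul₀ ENNReal.toReal_nonneg hM
    (norm_setIntegral_le_of_norm_le_const (f := F) (measure_lt_top μ A) hF)

lemma abs_sum_indicator_childCube_le {z : Fin d → ℝ} {ℓ : ℝ} {c : (Fin d → Bool) → ℝ}
    (hc : ∀ σ, |c σ| ≤ M) (x : Fin d → ℝ) :
    |∑ σ, (dyadicCube (childCenter z ℓ σ) (ℓ / 2)).indicator (fun _ => c σ) x| ≤ M := by
  rw [Finset.sum_eq_single (fun i => decide (z i ≤ x i))]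
  · exact (norm_indicator_le_norm_self (fun _ => c _) x).trans (hc _)
  · intro σ _ hσ
    exact Set.indicator_of_notMem (fun hx => hσ (eq_of_mem_dyadicCube_childCenter hx)) _
  · exact fun h => absurd (Finset.mem_univ _) h

lemma abs_mdiff_le [IsFiniteMeasure μ] {z : Fin d → ℝ} {ℓ : ℝ} (hM : 0 ≤ M)
    (hF : ∀ y ∈ dyadicCube z ℓ, |F y| ≤ M) (x : Fin d → ℝ) :
    |mdiff μ z ℓ F x| ≤ 2 * M := by
  have hchildren := abs_sum_indicator_childCube_le (z := z) (ℓ := ℓ)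
    (c := fun σ => cubeAvg μ (dyadicCube (childCenter z ℓ σ) (ℓ / 2)) F)
    (fun σ => abs_cubeAvg_le hM fun y hy => hF y (dyadicCube_childCenter_subset z ℓ σ hy)) x
  have hparent : |(dyadicCube z ℓ).indicator (fun _ => cubeAvg μ (dyadicCube z ℓ) F) x| ≤ M :=
    (norm_indicator_le_norm_self (fun _ => cubeAvg μ (dyadicCube z ℓ) F) x).trans
      (abs_cubeAvg_le hM hF)
  exact (abs_sub _ _).trans (by linarith)

lemma mdiff_eq_zero_of_notMem {z x : Fin d → ℝ} {ℓ : ℝ} (hx : x ∉ dyadicCube z ℓ) :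
    mdiff μ z ℓ F x = 0 := by
  simp only [mdiff, Set.indicator_of_notMem hx, sub_zero]
  exact Finset.sum_eq_zero fun σ _ =>
    Set.indicator_of_notMem (fun h => hx (dyadicCube_childCenter_subset z ℓ σ h)) _

lemma integral_mdiff_sq_le [IsFiniteMeasure μ] {z : Fin d → ℝ} {ℓ : ℝ} (hM : 0 ≤ M)
    (hF : ∀ y ∈ dyadicCube z ℓ, |F y| ≤ M) :
    ∫ x, mdiff μ z ℓ F x ^ 2 ∂μ ≤ (2 * M) ^ 2 * (μ (dyadicCube z ℓ)).toReal := by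
  rw [← setIntegral_eq_integral_of_forall_compl_eq_zero fun x hx => by
    rw [mdiff_eq_zero_of_notMem hx, zero_pow two_ne_zero]]
  refine (le_abs_self _).trans (norm_setIntegral_le_of_norm_le_const
    (f := fun x => mdiff μ z ℓ F x ^ 2) (measure_lt_top μ _) fun x _ => ?_)
  rw [Real.norm_eq_abs, abs_pow]
  exact pow_le_pow_left₀ (abs_nonneg _) (abs_mdiff_le hM hF x) 2

end MartingaleDifference

lemma abs_setIntegral_compl_kernel_sub_le {d : ℕ} {μ : Measure (Fin d → ℝ)}
    {K : (Fin d → ℝ) → (Fin d → ℝ) → ℝ} {m ε : ℝ} (hm : 0 ≤ m) (hε : 0 < ε)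
    (hgrowth : ∀ x ρ, 0 < ρ → μ (ball x ρ) ≤ ENNReal.ofReal (ρ ^ m))
    (hsize : ∀ x y, x ≠ y → |K x y| ≤ 1 / dist x y ^ m)
    (hholder : ∀ x y y', 2 * dist y y' ≤ dist x y →
      |K x y - K x y'| ≤ dist y y' ^ ε / dist x y ^ (m + ε))
    {zS zQ : Fin d → ℝ} {ℓS ℓQ : ℝ} (hℓQ : 0 < ℓQ) (hQS : ℓQ ≤ ℓS)
    (hsub : dyadicCube zQ ℓQ ⊆ dyadicCube zS ℓS) {y : Fin d → ℝ}
    (hy : y ∈ dyadicCube zQ ℓQ) :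
    |∫ x in (dyadicCube zS (1.1 * ℓS))ᶜ, (K x y - K x zQ) ∂μ|
      ≤ (2 ^ m * (1 - 2 ^ (-ε))⁻¹ * 10 ^ ε + 2 * 20 ^ (m + ε)) * (ℓQ / ℓS) ^ ε := by
  have hℓS : 0 < ℓS := hℓQ.trans_le hQS
  have hq := one_sub_two_rpow_neg_pos hε
  set A := (dyadicCube zS (1.1 * ℓS))ᶜ
  set B := {x | ℓQ ≤ dist x y}
  set t := ℓQ / ℓS
  have ht : 0 < t := by positivity
  have hfar : ∀ x ∈ A, ∀ w ∈ dyadicCube zS ℓS, ℓS / 20 ≤ dist x w := fun x hx w hw => by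
    linarith [sub_div_two_le_dist_of_mem_dyadicCube_of_notMem hw hx]
  have hyz : dist y zQ ≤ ℓQ / 2 := dist_le_of_mem_dyadicCube hℓQ.le hy
  have hB : MeasurableSet B :=
    measurableSet_le measurable_const (continuous_id.dist continuous_const).measurable
  have hfar_part := lintegral_abs_kernel_sub_le_of_far (μ := μ) (s := A ∩ B) (by linarith) hε
    hgrowth hholder (R := ℓS / 20) (by positivity)
    fun x hx => ⟨hfar x hx.1 y (hsub hy), by linarith [show ℓQ ≤ dist x y from hx.2]⟩
  have hnear_part := lintegral_abs_kernel_sub_le_of_near (μ := μ) (s := A \ B) (R := ℓQ)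
    hm hε.le hgrowth hsize (by positivity) (fun x hx => mem_ball.2 (not_le.1 hx.2))
    fun x hx =>
      ⟨hfar x hx.1 y (hsub hy), hfar x hx.1 zQ (hsub (center_mem_dyadicCube zQ hℓQ))⟩
  have hfar_bound : (dist y zQ / (ℓS / 20)) ^ ε ≤ 10 ^ ε * t ^ ε := by
    have h10 : 10 * t * (ℓS / 20) = ℓQ / 2 := by simp only [t]; field_simp; ring
    calc (dist y zQ / (ℓS / 20)) ^ ε ≤ (10 * t) ^ ε := by
          gcongr
          rw [div_le_iff₀ (by positivity)]
          linarith
      _ = 10 ^ ε * t ^ ε := Real.mul_rpow (by norm_num) ht.le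
  have hnear_bound : (ℓQ / (ℓS / 20)) ^ (m + ε) ≤ 20 ^ (m + ε) * t ^ ε := by
    have h20 : ℓQ / (ℓS / 20) = 20 * t := by simp only [t]; field_simp
    calc (ℓQ / (ℓS / 20)) ^ (m + ε) = 20 ^ (m + ε) * (t ^ m * t ^ ε) := by
          rw [h20, Real.mul_rpow (by norm_num) ht.le, Real.rpow_add ht]
      _ ≤ 20 ^ (m + ε) * (1 * t ^ ε) := by
          gcongr
          exact Real.rpow_le_one ht.le ((div_le_one hℓS).2 hQS) hm
      _ = 20 ^ (m + ε) * t ^ ε := by ring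
  calc |∫ x in A, (K x y - K x zQ) ∂μ|
      ≤ (∫⁻ x in A, ENNReal.ofReal ‖K x y - K x zQ‖ ∂μ).toReal :=
        norm_integral_le_lintegral_norm (μ := μ.restrict A) fun x => K x y - K x zQ
    _ ≤ (2 ^ m * (1 - 2 ^ (-ε))⁻¹ * 10 ^ ε + 2 * 20 ^ (m + ε)) * t ^ ε := by
      refine ENNReal.toReal_le_of_le_ofReal (by positivity) ?_
      rw [← lintegral_inter_add_sdiff _ A hB]
      refine (add_le_add hfar_part hnear_part).trans ?_
      rw [← ENNReal.ofReal_add (by positivity) (by positivity)]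
      refine ENNReal.ofReal_le_ofReal ?_
      calc 2 ^ m * (1 - 2 ^ (-ε))⁻¹ * (dist y zQ / (ℓS / 20)) ^ ε
            + 2 * (ℓQ / (ℓS / 20)) ^ (m + ε)
          ≤ 2 ^ m * (1 - 2 ^ (-ε))⁻¹ * (10 ^ ε * t ^ ε)
            + 2 * (20 ^ (m + ε) * t ^ ε) := by
            gcongr
        _ = _ := by ring

/-- `T^*(1 - 1_{S'})` is realized, modulo the additive constant killed by `Δ_Q`, as
`y ↦ ∫_{S'ᶜ} (K(x,y) − K(x,z_Q)) dμ(x)`. -/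
theorem mdiff_far_part_estimate (d : ℕ) (m ε : ℝ) (hm : 0 ≤ m) (hε : 0 < ε) :
    ∃ C : ℝ, 0 < C ∧
      ∀ (μ : Measure (Fin d → ℝ)) (_ : IsFiniteMeasure μ)
        (K : (Fin d → ℝ) → (Fin d → ℝ) → ℝ) (C₀ : ℝ),
        Measurable (Function.uncurry K) →
        (∀ x ρ, 0 < ρ → μ (Metric.ball x ρ) ≤ ENNReal.ofReal (ρ ^ m)) →
        (∀ x y, x ≠ y → |K x y| ≤ 1 / dist x y ^ m) →
        (∀ x y y', 2 * dist y y' ≤ dist x y →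
          |K x y - K x y'| ≤ dist y y' ^ ε / dist x y ^ (m + ε)) →
        (∀ (zP : Fin d → ℝ) (ℓP : ℝ), 0 < ℓP →
          ∫ y, (∫ x in dyadicCube zP ℓP, K x y ∂μ) ^ 2 ∂μ
            ≤ C₀ * (μ (dyadicCube zP ℓP)).toReal) →
      ∀ (zS zQ : Fin d → ℝ) (ℓS ℓQ : ℝ),
        0 < ℓQ → ℓQ ≤ ℓS →
        dyadicCube zQ ℓQ ⊆ dyadicCube zS ℓS →
        ∫ x, (mdiff μ zQ ℓQ
            (fun y => ∫ x in (dyadicCube zS (1.1 * ℓS))ᶜ, (K x y - K x zQ) ∂μ) x) ^ 2 ∂μ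
          ≤ C * (μ (dyadicCube zQ ℓQ)).toReal * (ℓQ / ℓS) ^ (2 * ε) := by
  set C : ℝ := 2 ^ m * (1 - 2 ^ (-ε))⁻¹ * 10 ^ ε + 2 * 20 ^ (m + ε)
  have hq := one_sub_two_rpow_neg_pos hε
  have hC : 0 < C := by positivity
  refine ⟨4 * C ^ 2, by positivity, ?_⟩
  intro μ _ K C₀ _ hgrowth hsize hholder _ zS zQ ℓS ℓQ hℓQ hQS hsub
  have ht : 0 ≤ ℓQ / ℓS := div_nonneg hℓQ.le (hℓQ.le.trans hQS)
  calc _ ≤ (2 * (C * (ℓQ / ℓS) ^ ε)) ^ 2 * (μ (dyadicCube zQ ℓQ)).toReal :=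
        integral_mdiff_sq_le (by positivity) fun y hy =>
          abs_setIntegral_compl_kernel_sub_le hm hε hgrowth hsize hholder hℓQ hQS hsub hy
    _ = 4 * C ^ 2 * (μ (dyadicCube zQ ℓQ)).toReal * (ℓQ / ℓS) ^ (2 * ε) := by
        rw [mul_comm 2 ε, Real.rpow_mul ht, Real.rpow_two]
        ring
end

section
/- In the random dyadic lattice model on ℝ^d (each generation's parent grid chosen uniformly and independently among 2^d translates), for fixed parameters r ∈ ℕ and γ ∈ (0,1), the probability that a fixed cube Q is bad — i.e. there exists R in the same lattice with ℓ(R) ≥ 2^r ℓ(Q) and dist(Q, sk(R)) < ℓ(R)^{1-γ} ℓ(Q)^γ — is at most C₁(d,γ) 2^{-c₂ γ r} for constants C₁, c₂ > 0 depending only on d and γ. -/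
/-!
At scale `s`, the skeleton hyperplanes orthogonal to the `i`-th axis are the translates of
`2^(s-1) ℓ ℤ` by `D ℓ`, where `D = ∑_{k<s} ωₖ(i) 2^k` is the number whose binary digits are the
first `s` random bits in direction `i`; hence `D` is uniform on `{0, …, 2^s - 1}`. The side of `Q`
in direction `i` comes within `(2^s ℓ)^(1-γ) ℓ^γ = 2^(s(1-γ)) ℓ` of such a hyperplane only if `D`
lies, modulo `2^(s-1)`, in an interval of length `1 + 2·2^(s(1-γ))`, which at most
`8·2^(s(1-γ))` of the `2^s` values do. A union bound over the `d` directions and the scales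
`s ≥ r` sums the geometric series `∑_{s ≥ r} 8 d 2^(-γ s)`.
-/

open MeasureTheory

theorem Nat.ofBits_eq_sum_range (c : ℕ → Bool) (s : ℕ) :
    Nat.ofBits (fun k : Fin s => c k) = ∑ k ∈ Finset.range s, if c k then 2 ^ k else 0 := by
  induction s generalizing c with
  | zero => rfl
  | succ s ih =>
    rw [Nat.ofBits_succ, Finset.sum_range_succ']
    have := ih (fun k => c (k + 1))
    simp only [Function.comp_def, Fin.val_succ, Fin.val_zero] at this ⊢
    rw [this, Finset.mul_sum]
    congr 1
    · refine Finset.sum_congr rfl fun k _ => ?_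
      split_ifs <;> ring
    · cases c 0 <;> rfl

theorem sum_range_ite_two_pow_mul (c : ℕ → Bool) (s : ℕ) (ℓ : ℝ) :
    (∑ k ∈ Finset.range s, if c k then (2 : ℝ) ^ k * ℓ else 0)
      = Nat.ofBits (fun k : Fin s => c k) * ℓ := by
  rw [Nat.ofBits_eq_sum_range, Nat.cast_sum, Finset.sum_mul]
  refine Finset.sum_congr rfl fun k _ => ?_
  split_ifs <;> simp

theorem card_Icc_ceil_floor_le {α β : ℝ} (h : α ≤ β) :
    ((Finset.Icc ⌈α⌉ ⌊β⌋).card : ℝ) ≤ β - α + 1 := by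
  have hcast : ((Finset.Icc ⌈α⌉ ⌊β⌋).card : ℝ) = ((max (⌊β⌋ + 1 - ⌈α⌉) 0 : ℤ) : ℝ) := by
    rw [Int.card_Icc, ← Int.toNat_eq_max]; rfl
  rw [hcast, Int.cast_max, max_le_iff]
  push_cast
  exact ⟨by linarith [Int.floor_le β, Int.le_ceil α], by linarith⟩

open Classical in
theorem card_filter_range_exists_add_mul_mem_Ioo_le (k p : ℕ) {α β : ℝ} (hαβ : α ≤ β) :
    ((((Finset.range (k * p)).filter fun m : ℕ =>
        ∃ n : ℤ, (m : ℝ) + n * p ∈ Set.Ioo α β).card : ℕ) : ℝ) ≤ k * (β - α + 1) := by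
  -- every such `m` is recovered from its quotient by `p` and the integer `m + n p` it hits
  have hsub : ((Finset.range (k * p)).filter fun m : ℕ =>
        ∃ n : ℤ, (m : ℝ) + n * p ∈ Set.Ioo α β) ⊆
      ((Finset.Icc ⌈α⌉ ⌊β⌋) ×ˢ Finset.range k).image
        (fun zj : ℤ × ℕ => (zj.1 % (p : ℤ)).toNat + zj.2 * p) := by
    intro m hm
    obtain ⟨hmk, n, hlo, hhi⟩ := by simpa only [Finset.mem_filter, Finset.mem_range] using hm
    have hp : 0 < p := Nat.pos_of_ne_zero (by rintro rfl; simp at hmk)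
    refine Finset.mem_image.2 ⟨((m : ℤ) + n * p, m / p), ?_, ?_⟩
    · refine Finset.mem_product.2 ⟨Finset.mem_Icc.2 ⟨?_, ?_⟩, ?_⟩
      · exact Int.ceil_le.2 (by push_cast; exact hlo.le)
      · exact Int.le_floor.2 (by push_cast; exact hhi.le)
      · exact Finset.mem_range.2 ((Nat.div_lt_iff_lt_mul hp).2 hmk)
    · simp only
      rw [Int.add_mul_emod_self_right, ← Int.natCast_mod, Int.toNat_natCast]
      have := Nat.mod_add_div m p
      linarith [Nat.mul_comm p (m / p)]
  calc (((Finset.range (k * p)).filter fun m : ℕ =>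
        ∃ n : ℤ, (m : ℝ) + n * p ∈ Set.Ioo α β).card : ℝ)
      ≤ ((Finset.Icc ⌈α⌉ ⌊β⌋) ×ˢ Finset.range k).card := by
        exact_mod_cast (Finset.card_le_card hsub).trans Finset.card_image_le
    _ = (Finset.Icc ⌈α⌉ ⌊β⌋).card * k := by simp
    _ ≤ (β - α + 1) * k := by gcongr; exact card_Icc_ceil_floor_le hαβ
    _ = k * (β - α + 1) := mul_comm _ _

theorem pow_mul_rpow_one_sub_mul_rpow {x ℓ : ℝ} (hx : 0 ≤ x) (hℓ : 0 < ℓ) (γ : ℝ) (s : ℕ) :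
    (x ^ s * ℓ) ^ (1 - γ) * ℓ ^ γ = (x ^ (1 - γ)) ^ s * ℓ := by
  rw [Real.mul_rpow (by positivity) hℓ.le, mul_assoc, ← Real.rpow_add hℓ, sub_add_cancel,
    Real.rpow_one, ← Real.rpow_natCast, ← Real.rpow_mul hx, mul_comm (s : ℝ),
    Real.rpow_mul_natCast hx]

section

variable {ι : Type*} [Fintype ι]

def IsIIDUniform (P : Measure (ℕ → ι → Bool)) : Prop :=
  ∀ (n : ℕ) (b : Fin n → ι → Bool),
    P {ω | ∀ k : Fin n, ω k = b k} = (1 / 2 ^ Fintype.card ι) ^ n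

theorem card_fun_apply_eq_le [DecidableEq ι] (s : ℕ) (i : ι) (c : Fin s → Bool) :
    ((Finset.univ : Finset (Fin s → ι → Bool)).filter fun b => ∀ k, b k i = c k).card
      ≤ 2 ^ ((Fintype.card ι - 1) * s) := by
  calc ((Finset.univ : Finset (Fin s → ι → Bool)).filter fun b => ∀ k, b k i = c k).card
      ≤ (Finset.univ : Finset (Fin s → {j // j ≠ i} → Bool)).card := by
        refine Finset.card_le_card_of_injOn (fun b k j => b k j) (fun _ _ => Finset.mem_univ _) ?_
        intro b hb b' hb' hbb'
        simp only [Finset.coe_filter, Finset.mem_univ, true_and, Set.mem_ofPred_eq] at hb hb'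
        funext k j
        by_cases hj : j = i
        · subst hj; rw [hb k, hb' k]
        · exact congrFun (congrFun hbb' k) ⟨j, hj⟩
    _ = 2 ^ ((Fintype.card ι - 1) * s) := by
        simp [Fintype.card_subtype_compl, ← pow_mul, mul_comm]

variable {P : Measure (ℕ → ι → Bool)}

theorem measure_forall_apply_eq_le (hP : IsIIDUniform P) (s : ℕ) (i : ι) (c : Fin s → Bool) :
    P {ω | ∀ k : Fin s, ω k i = c k} ≤ 2⁻¹ ^ s := by
  classical
  set B := (Finset.univ : Finset (Fin s → ι → Bool)).filter fun b => ∀ k, b k i = c k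
  have hsub : {ω : ℕ → ι → Bool | ∀ k : Fin s, ω k i = c k} ⊆
      ⋃ b ∈ B, {ω | ∀ k : Fin s, ω k = b k} := fun ω hω =>
    Set.mem_biUnion (x := fun k : Fin s => ω k) (by simpa [B] using hω) fun _ => rfl
  obtain ⟨N, hN⟩ : ∃ N, Fintype.card ι = N + 1 :=
    Nat.exists_eq_add_one_of_ne_zero (Fintype.card_pos_iff.2 ⟨i⟩).ne'
  calc P {ω | ∀ k : Fin s, ω k i = c k}
      ≤ ∑ b ∈ B, P {ω | ∀ k : Fin s, ω k = b k} :=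
        (measure_mono hsub).trans (measure_biUnion_finset_le _ _)
    _ = B.card * (1 / 2 ^ (N + 1)) ^ s := by
        rw [Finset.sum_congr rfl fun b _ => hP s b, Finset.sum_const, nsmul_eq_mul, hN]
    _ ≤ 2 ^ (N * s) * (1 / 2 ^ (N + 1)) ^ s := by
        gcongr
        exact_mod_cast hN ▸ card_fun_apply_eq_le s i c
    _ = 2⁻¹ ^ s := by
        rw [pow_mul, ← mul_pow, one_div, pow_succ, ENNReal.mul_inv (by simp) (by simp), ← mul_assoc,
          ENNReal.mul_inv_cancel (by simp) (by simp), one_mul]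

theorem measure_ofBits_mem_le (hP : IsIIDUniform P) (s : ℕ) (i : ι) (M : Finset ℕ) :
    P {ω | Nat.ofBits (fun k : Fin s => ω k i) ∈ M} ≤ M.card * 2⁻¹ ^ s := by
  have hsub : {ω : ℕ → ι → Bool | Nat.ofBits (fun k : Fin s => ω k i) ∈ M} ⊆
      ⋃ m ∈ M, {ω | ∀ k : Fin s, ω k i = m.testBit k} := by
    intro ω hω
    refine Set.mem_biUnion hω fun k => ?_
    exact (Nat.testBit_ofBits_lt (fun k : Fin s => ω k i) k k.2).symm
  calc P {ω | Nat.ofBits (fun k : Fin s => ω k i) ∈ M}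
      ≤ ∑ m ∈ M, P {ω | ∀ k : Fin s, ω k i = m.testBit k} :=
        (measure_mono hsub).trans (measure_biUnion_finset_le _ _)
    _ ≤ ∑ _m ∈ M, (2⁻¹ : ENNReal) ^ s :=
        Finset.sum_le_sum fun m _ => measure_forall_apply_eq_le hP s i _
    _ = M.card * 2⁻¹ ^ s := by rw [Finset.sum_const, nsmul_eq_mul]

open Classical in
theorem measure_exists_ofBits_add_mul_mem_Ioo_le (hP : IsIIDUniform P)
    {s : ℕ} (hs : 1 ≤ s) (i : ι) {α β : ℝ} (hαβ : α ≤ β) :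
    P {ω | ∃ n : ℤ, (Nat.ofBits (fun k : Fin s => ω k i) : ℝ) + n * 2 ^ (s - 1) ∈ Set.Ioo α β}
      ≤ ENNReal.ofReal (2 * (β - α + 1)) * 2⁻¹ ^ s := by
  set M := (Finset.range (2 * 2 ^ (s - 1))).filter fun m : ℕ =>
    ∃ n : ℤ, (m : ℝ) + n * ((2 ^ (s - 1) : ℕ) : ℝ) ∈ Set.Ioo α β
  have hsub : {ω : ℕ → ι → Bool |
      ∃ n : ℤ, (Nat.ofBits (fun k : Fin s => ω k i) : ℝ) + n * 2 ^ (s - 1) ∈ Set.Ioo α β} ⊆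
      {ω | Nat.ofBits (fun k : Fin s => ω k i) ∈ M} := by
    intro ω hω
    refine Finset.mem_filter.2 ⟨Finset.mem_range.2 ?_, by exact_mod_cast hω⟩
    rw [← pow_succ', Nat.sub_add_cancel hs]
    exact Nat.ofBits_lt_two_pow _
  have hM : (M.card : ENNReal) ≤ ENNReal.ofReal (2 * (β - α + 1)) := by
    rw [← ENNReal.ofReal_natCast]
    exact ENNReal.ofReal_le_ofReal
      ((card_filter_range_exists_add_mul_mem_Ioo_le 2 (2 ^ (s - 1)) hαβ).trans_eq (by norm_num))
  calc _ ≤ P {ω | Nat.ofBits (fun k : Fin s => ω k i) ∈ M} := measure_mono hsub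
    _ ≤ M.card * 2⁻¹ ^ s := measure_ofBits_mem_le hP s i M
    _ ≤ ENNReal.ofReal (2 * (β - α + 1)) * 2⁻¹ ^ s := by gcongr

/-- The side `[a, a + ℓ]` of `Q` in direction `i` comes within `ℓ(R)^(1-γ) ℓ(Q)^γ` of one of the
hyperplanes `{x i = t}` of the skeleton of the cubes `R` of side `2^s ℓ`. -/
def nearSkeleton (γ ℓ a : ℝ) (s : ℕ) (i : ι) : Set (ℕ → ι → Bool) :=
  {ω | ∃ x, (a ≤ x ∧ x ≤ a + ℓ) ∧ ∃ n : ℤ,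
    |x - ((∑ k ∈ Finset.range s, if ω k i then (2 : ℝ) ^ k * ℓ else 0)
      + n * ((2 : ℝ) ^ (s - 1) * ℓ))| < ((2 : ℝ) ^ s * ℓ) ^ (1 - γ) * ℓ ^ γ}

theorem measure_nearSkeleton_le (hP : IsIIDUniform P)
    {γ ℓ : ℝ} (hγ : γ ≤ 1) (hℓ : 0 < ℓ) (a : ℝ) {s : ℕ} (hs : 1 ≤ s) (i : ι) :
    P (nearSkeleton γ ℓ a s i) ≤ 8 * ENNReal.ofReal (2 ^ (-γ)) ^ s := by
  set T := ((2 : ℝ) ^ (1 - γ)) ^ s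
  have hT : 1 ≤ T := one_le_pow₀ (Real.one_le_rpow one_le_two (by linarith))
  have hsub : nearSkeleton γ ℓ a s i ⊆ {ω | ∃ n : ℤ,
      (Nat.ofBits (fun k : Fin s => ω k i) : ℝ) + n * 2 ^ (s - 1) ∈
        Set.Ioo (a / ℓ - T) (a / ℓ + 1 + T)} := by
    rintro ω ⟨x, ⟨hax, hxa⟩, n, hx⟩
    rw [sum_range_ite_two_pow_mul, pow_mul_rpow_one_sub_mul_rpow zero_le_two hℓ, abs_lt] at hx
    refine ⟨n, ?_, ?_⟩
    · rw [show a / ℓ - T = (a - T * ℓ) / ℓ by field_simp, div_lt_iff₀ hℓ]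
      linarith
    · rw [show a / ℓ + 1 + T = (a + ℓ + T * ℓ) / ℓ by field_simp, lt_div_iff₀ hℓ]
      linarith
  calc P (nearSkeleton γ ℓ a s i)
      ≤ ENNReal.ofReal (2 * ((a / ℓ + 1 + T) - (a / ℓ - T) + 1)) * 2⁻¹ ^ s :=
        (measure_mono hsub).trans (measure_exists_ofBits_add_mul_mem_Ioo_le hP hs i (by linarith))
    _ ≤ ENNReal.ofReal (8 * T) * 2⁻¹ ^ s := by gcongr ENNReal.ofReal ?_ * _; linarith
    _ = 8 * ENNReal.ofReal (2 ^ (-γ)) ^ s := by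
        rw [ENNReal.ofReal_mul (by norm_num), ENNReal.ofReal_pow (by positivity), mul_assoc,
          ← mul_pow, ← ENNReal.ofReal_ofNat 2, ← ENNReal.ofReal_inv_of_pos two_pos,
          ← ENNReal.ofReal_mul (by positivity), ← div_eq_mul_inv, ← Real.rpow_sub_one two_ne_zero,
          sub_sub_cancel_left, ENNReal.ofReal_ofNat]

end

theorem measure_iUnion_ge_le_of_le_geometric {Ω : Type*} [MeasurableSpace Ω] {μ : Measure Ω}
    {A : ℕ → Set Ω} {C ρ : ENNReal} {r : ℕ} (hA : ∀ s, r ≤ s → μ (A s) ≤ C * ρ ^ s) :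
    μ (⋃ s, ⋃ (_ : r ≤ s), A s) ≤ C * ρ ^ r * (1 - ρ)⁻¹ := by
  have hsub : (⋃ s, ⋃ (_ : r ≤ s), A s) ⊆ ⋃ t, A (r + t) := by
    simp only [Set.iUnion_subset_iff]
    intro s hs
    simpa [Nat.add_sub_cancel' hs] using Set.subset_iUnion (fun t => A (r + t)) (s - r)
  calc μ (⋃ s, ⋃ (_ : r ≤ s), A s)
      ≤ ∑' t, μ (A (r + t)) := (measure_mono hsub).trans (measure_iUnion_le _)
    _ ≤ ∑' t, C * ρ ^ r * ρ ^ t :=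
        ENNReal.tsum_le_tsum fun t => (hA _ (Nat.le_add_right r t)).trans_eq (by ring)
    _ = C * ρ ^ r * (1 - ρ)⁻¹ := by rw [ENNReal.tsum_mul_left, ENNReal.tsum_geometric]

/-- in the random dyadic lattice model (each generation's parent grid
chosen uniformly and independently among the `2^d` translates, encoded by
`ω : ℕ → Fin d → Bool` with `P` making the coordinates independent and uniform), for
fixed `r ≥ 1` and `γ ∈ (0,1)`, the probability that a fixed cube `Q` (of side `ℓ`,
lower corner `q`, belonging to the initial fine grid) is bad — i.e. there is a scale
`s ≥ r` at which `Q` comes within distance `(2^s ℓ)^{1-γ} ℓ^γ` of the skeleton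
(children-boundary hyperplanes, of spacing `2^{s-1}ℓ`, offset by the accumulated random
translations `Σ_{k<s} 2^k ℓ·ω_k`) of some cube `R` of the lattice with
`ℓ(R) = 2^s ℓ ≥ 2^r ℓ` — is at most `C₁ 2^{-c₂ γ r}` with `C₁, c₂ > 0` depending only
on `d` and `γ`. -/
theorem probability_bad_cube (d : ℕ) (hd : 1 ≤ d) (γ : ℝ) (hγ0 : 0 < γ) (hγ1 : γ < 1) :
    ∃ C₁ c₂ : ℝ, 0 < C₁ ∧ 0 < c₂ ∧
      ∀ (r : ℕ), 1 ≤ r → ∀ (ℓ : ℝ), 0 < ℓ → ∀ (q : Fin d → ℝ),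
      ∀ (P : Measure (ℕ → Fin d → Bool)), IsProbabilityMeasure P →
        (∀ (n : ℕ) (b : Fin n → Fin d → Bool),
          P {ω | ∀ k : Fin n, ω (k : ℕ) = b k} = ((1 : ENNReal) / 2 ^ d) ^ n) →
        (P {ω | ∃ s : ℕ, r ≤ s ∧ ∃ x : Fin d → ℝ,
            (∀ i, q i ≤ x i ∧ x i ≤ q i + ℓ) ∧
            ∃ i : Fin d, ∃ n : ℤ,
              |x i - ((∑ k ∈ Finset.range s, (if ω k i then (2 : ℝ) ^ k * ℓ else 0))
                  + (n : ℝ) * ((2 : ℝ) ^ (s - 1) * ℓ))|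
                < ((2 : ℝ) ^ s * ℓ) ^ (1 - γ) * ℓ ^ γ}).toReal
          ≤ C₁ * (2 : ℝ) ^ (-(c₂ * γ * (r : ℝ))) := by
  set ρ : ℝ := 2 ^ (-γ) with hρ
  have hρ1 : ρ < 1 := Real.rpow_lt_one_of_one_lt_of_neg one_lt_two (neg_neg_of_pos hγ0)
  have hd0 : (0 : ℝ) < d := by exact_mod_cast hd
  have h1ρ : 0 < 1 - ρ := sub_pos.2 hρ1
  refine ⟨8 * d * (1 - ρ)⁻¹, 1, by positivity, one_pos, ?_⟩
  intro r hr ℓ hℓ q P _ hP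
  have hscale : ∀ s, r ≤ s →
      P (⋃ i, nearSkeleton γ ℓ (q i) s i) ≤ 8 * d * ENNReal.ofReal ρ ^ s := fun s hs =>
    calc P (⋃ i, nearSkeleton γ ℓ (q i) s i)
        ≤ ∑ i, P (nearSkeleton γ ℓ (q i) s i) := measure_iUnion_fintype_le _ _
      _ ≤ ∑ _i : Fin d, 8 * ENNReal.ofReal ρ ^ s := Finset.sum_le_sum fun i _ =>
          measure_nearSkeleton_le (by simpa [IsIIDUniform] using hP) hγ1.le hℓ (q i) (hr.trans hs) i
      _ = 8 * d * ENNReal.ofReal ρ ^ s := by simp [mul_comm, mul_assoc]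
  refine ENNReal.toReal_le_of_le_ofReal (by positivity) ?_
  calc P _ ≤ P (⋃ s, ⋃ (_ : r ≤ s), ⋃ i, nearSkeleton γ ℓ (q i) s i) := by
        refine measure_mono ?_
        rintro ω ⟨s, hrs, x, hx, i, n, hn⟩
        simp only [Set.mem_iUnion]
        exact ⟨s, hrs, i, x i, hx i, n, hn⟩
    _ ≤ 8 * d * ENNReal.ofReal ρ ^ r * (1 - ENNReal.ofReal ρ)⁻¹ :=
        measure_iUnion_ge_le_of_le_geometric hscale
    _ = ENNReal.ofReal (8 * d * (1 - ρ)⁻¹ * 2 ^ (-(1 * γ * r))) := by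
        rw [one_mul, neg_mul_eq_neg_mul, Real.rpow_mul_natCast zero_le_two, ← hρ,
          ← ENNReal.ofReal_one, ← ENNReal.ofReal_sub _ (by positivity),
          ← ENNReal.ofReal_inv_of_pos h1ρ, ← ENNReal.ofReal_pow (by positivity),
          ← ENNReal.ofReal_natCast d, ← ENNReal.ofReal_ofNat 8,
          ← ENNReal.ofReal_mul (by positivity), ← ENNReal.ofReal_mul (by positivity),
          ← ENNReal.ofReal_mul (by positivity)]
        ring_nf
end
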